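/- Let n ≥ 2, let a_1, …, a_{n−1}, q_1, …, q_{n−1}, x_1, …, x_{n−1}, x_n, b, w_n be positive real numbers with 1 − Σ_{l=1}^{n−1} x_l/q_l > 0, and let J be the (2n−1)×(2n−1) real matrix in block form J = [[O, A, 0], [R, −b w_n I, 0], [r, 0, −b w_n]] with O the zero matrix, A = −w_n diag(a_1, …, a_{n−1}), R the (n−1)×(n−1) matrix with diagonal entries q_j − x_j and off-diagonal entries −x_j in row j, I the identity of order n−1, and r the row vector with all entries −x_n. Then every complex eigenvalue of J has strictly negative real part. -/

import Mathlib

/-!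
Write an eigenvector of `J` for the eigenvalue `z` as `(u, v, s)`. If `u = 0` then `v = 0`, so
`s ≠ 0` and `z = -b wn`. Otherwise eliminating `v` leaves, with `dᵢ = wn aᵢ` and `c = b wn`,
`dᵢ (qᵢ uᵢ - xᵢ Σ u) + z (z + c) uᵢ = 0`. Pairing the `i`-th equation with `conj uᵢ / (xᵢ dᵢ)` and
summing gives `B z² + B c z + (A - |Σ u|²) = 0` with `A = Σ qᵢ |uᵢ|² / xᵢ` and
`B = Σ |uᵢ|² / (xᵢ dᵢ)` both positive, and Cauchy–Schwarz with `Σ xᵢ / qᵢ < 1` gives `|Σ u|² < A`.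
A quadratic with positive real coefficients has its roots in the open left half-plane.
-/

open Complex ComplexConjugate Finset Matrix

theorem Complex.re_neg_of_quadratic_eq_zero {α β γ : ℝ} (hα : 0 < α) (hβ : 0 < β) (hγ : 0 < γ)
    {z : ℂ} (h : α * z ^ 2 + β * z + γ = 0) : z.re < 0 := by
  have hre := congrArg re h
  have him := congrArg im h
  simp only [pow_two, add_re, add_im, mul_re, mul_im, ofReal_re, ofReal_im, zero_re, zero_im,
    zero_mul, sub_zero, add_zero] at hre him
  rcases eq_or_ne z.im 0 with h0 | h0
  · rw [h0] at hre
    nlinarith [sq_nonneg z.re]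
  · have : z.im * (2 * α * z.re + β) = 0 := by linear_combination him
    nlinarith [(mul_eq_zero.mp this).resolve_left h0]

theorem Complex.normSq_sum_le_sum_mul_sum_normSq_div {ι : Type*} (s : Finset ι) (u : ι → ℂ)
    {w : ι → ℝ} (hw : ∀ i ∈ s, 0 < w i) :
    normSq (∑ i ∈ s, u i) ≤ (∑ i ∈ s, w i) * ∑ i ∈ s, normSq (u i) / w i := calc
  normSq (∑ i ∈ s, u i) = ‖∑ i ∈ s, u i‖ ^ 2 := (Complex.sq_norm _).symm
  _ ≤ (∑ i ∈ s, ‖u i‖) ^ 2 := by gcongr; exact norm_sum_le s u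
  _ ≤ (∑ i ∈ s, w i) * ∑ i ∈ s, normSq (u i) / w i :=
    sum_sq_le_sum_mul_sum_of_sq_le_mul s (fun i hi => (hw i hi).le)
      (fun i hi => div_nonneg (normSq_nonneg _) (hw i hi).le)
      (fun i hi => by rw [mul_div_cancel₀ _ (hw i hi).ne', Complex.sq_norm])

theorem re_neg_of_reduced_eigenvector {ι : Type*} [Fintype ι] {d q x : ι → ℝ} {c : ℝ}
    (hd : ∀ i, 0 < d i) (hq : ∀ i, 0 < q i) (hx : ∀ i, 0 < x i) (hc : 0 < c)
    (hxq : ∑ i, x i / q i < 1) {z : ℂ} {u : ι → ℂ} (hu : u ≠ 0)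
    (h : ∀ i, d i * (q i * u i - x i * ∑ j, u j) + (z + c) * z * u i = 0) : z.re < 0 := by
  obtain ⟨i₀, hi₀⟩ := Function.ne_iff.mp hu
  set S := ∑ j, u j
  set A := ∑ i, normSq (u i) / (x i / q i)
  set B := ∑ i, normSq (u i) / (x i * d i)
  have hA : 0 < A := sum_pos' (fun i _ => div_nonneg (normSq_nonneg _) (div_pos (hx i) (hq i)).le)
    ⟨i₀, mem_univ _, div_pos (normSq_pos.2 hi₀) (div_pos (hx i₀) (hq i₀))⟩
  have hB : 0 < B := sum_pos' (fun i _ => div_nonneg (normSq_nonneg _) (mul_pos (hx i) (hd i)).le)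
    ⟨i₀, mem_univ _, div_pos (normSq_pos.2 hi₀) (mul_pos (hx i₀) (hd i₀))⟩
  have hSA : normSq S < A := calc
    normSq S ≤ (∑ i, x i / q i) * A :=
      normSq_sum_le_sum_mul_sum_normSq_div _ u fun i _ => div_pos (hx i) (hq i)
    _ < A := mul_lt_of_lt_one_left hA hxq
  have hterm : ∀ i, conj (u i) / (x i * d i) * (d i * (q i * u i - x i * S) + (z + c) * z * u i)
      = (normSq (u i) / (x i / q i) : ℝ) - conj (u i) * S
        + (z + c) * z * (normSq (u i) / (x i * d i) : ℝ) := by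
    intro i
    have hx0 : (x i : ℂ) ≠ 0 := ofReal_ne_zero.2 (hx i).ne'
    have hd0 : (d i : ℂ) ≠ 0 := ofReal_ne_zero.2 (hd i).ne'
    push_cast [← mul_conj]
    field_simp
  have hquad : (B : ℂ) * z ^ 2 + (B * c : ℝ) * z + (A - normSq S : ℝ) = 0 := by
    have hsum := Fintype.sum_congr _ _ hterm
    rw [Fintype.sum_eq_zero _ fun i => by rw [h i, mul_zero], sum_add_distrib, sum_sub_distrib,
      ← sum_mul, ← map_sum, ← mul_sum, ← ofReal_sum, ← ofReal_sum, conj_mul'] at hsum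
    rw [← Complex.sq_norm]
    push_cast
    linear_combination -hsum
  exact re_neg_of_quadratic_eq_zero hB (mul_pos hB hc) (sub_pos.2 hSA) hquad

section Jacobian

variable {ι : Type*} [Fintype ι] [DecidableEq ι]

def jacobian (a q x : ι → ℝ) (xn b wn : ℝ) : Matrix (ι ⊕ (ι ⊕ Unit)) (ι ⊕ (ι ⊕ Unit)) ℝ :=
  Matrix.of fun i j =>
      match i, j with
      | Sum.inl _, Sum.inl _ => 0
      | Sum.inl i, Sum.inr (Sum.inl j) => if i = j then -(wn * a i) else 0
      | Sum.inl _, Sum.inr (Sum.inr _) => 0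
      | Sum.inr (Sum.inl i), Sum.inl j => if i = j then q i - x i else -x i
      | Sum.inr (Sum.inl i), Sum.inr (Sum.inl j) => if i = j then -(b * wn) else 0
      | Sum.inr (Sum.inl _), Sum.inr (Sum.inr _) => 0
      | Sum.inr (Sum.inr _), Sum.inl _ => -xn
      | Sum.inr (Sum.inr _), Sum.inr (Sum.inl _) => 0
      | Sum.inr (Sum.inr _), Sum.inr (Sum.inr _) => -(b * wn)

variable (a q x : ι → ℝ) (xn b wn : ℝ) (w : ι ⊕ (ι ⊕ Unit) → ℂ)

theorem jacobian_mulVec_inl (i : ι) :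
    ((jacobian a q x xn b wn).map ofReal *ᵥ w) (.inl i) = -(wn * a i) * w (.inr (.inl i)) := by
  simp [mulVec, dotProduct, Fintype.sum_sum_type, jacobian, apply_ite ofReal, ite_mul]

theorem jacobian_mulVec_inr_inl (i : ι) :
    ((jacobian a q x xn b wn).map ofReal *ᵥ w) (.inr (.inl i)) =
      q i * w (.inl i) - x i * ∑ j, w (.inl j) - b * wn * w (.inr (.inl i)) := by
  have hrow : ∀ j, (if i = j then ((q i : ℂ) - x i) * w (.inl j) else -(x i * w (.inl j))) =
      (if i = j then q i * w (.inl i) else 0) - x i * w (.inl j) := by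
    intro j
    split_ifs with hij
    · subst hij; ring
    · ring
  simp only [mulVec, dotProduct, jacobian, map_apply, of_apply, Fintype.sum_sum_type,
    apply_ite ofReal, ofReal_sub, ofReal_neg, ite_mul, neg_mul, hrow, sum_sub_distrib, sum_ite_eq,
    mem_univ, ↓reduceIte, ofReal_mul, ofReal_zero, zero_mul, univ_unique, PUnit.default_eq_unit,
    sum_const_zero, add_zero, mul_sum]
  ring

theorem jacobian_mulVec_inr_inr :
    ((jacobian a q x xn b wn).map ofReal *ᵥ w) (.inr (.inr ())) =
      -xn * ∑ j, w (.inl j) - b * wn * w (.inr (.inr ())) := by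
  simp only [mulVec, dotProduct, jacobian, map_apply, of_apply, Fintype.sum_sum_type, ofReal_neg,
    neg_mul, sum_neg_distrib, ← mul_sum, ofReal_zero, zero_mul, sum_const_zero, univ_unique,
    PUnit.default_eq_unit, ofReal_mul, sum_singleton, zero_add]
  ring

theorem jacobian_eigenvalue_re_neg {a q x : ι → ℝ} {xn b wn : ℝ} (ha : ∀ i, 0 < a i)
    (hq : ∀ i, 0 < q i) (hx : ∀ i, 0 < x i) (hb : 0 < b) (hwn : 0 < wn)
    (hxq : ∑ i, x i / q i < 1) {z : ℂ} {w : ι ⊕ (ι ⊕ Unit) → ℂ} (hw : w ≠ 0)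
    (hJw : (jacobian a q x xn b wn).map ofReal *ᵥ w = z • w) : z.re < 0 := by
  have hJw' := congrFun hJw
  set u : ι → ℂ := fun i => w (.inl i)
  have h₁ : ∀ i, z * u i = -(wn * a i) * w (.inr (.inl i)) := fun i => by
    simpa [jacobian_mulVec_inl] using (hJw' (.inl i)).symm
  have h₂ : ∀ i, z * w (.inr (.inl i)) =
      q i * u i - x i * ∑ j, u j - b * wn * w (.inr (.inl i)) := fun i => by
    simpa [jacobian_mulVec_inr_inl] using (hJw' (.inr (.inl i))).symm
  by_cases hu : u = 0
  · have hv : ∀ i, w (.inr (.inl i)) = 0 := fun i => by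
      have hwa : (wn * a i : ℂ) ≠ 0 := by exact_mod_cast (mul_pos hwn (ha i)).ne'
      simpa [hu, hwa] using h₁ i
    have hs : w (.inr (.inr ())) ≠ 0 := by
      obtain ⟨k, hk⟩ := Function.ne_iff.mp hw
      rcases k with i | i | ⟨⟩
      · exact absurd (congrFun hu i) hk
      · exact absurd (hv i) hk
      · exact hk
    have hS : ∑ j, u j = 0 := by simp [hu]
    have h₃ := hJw' (.inr (.inr ()))
    rw [jacobian_mulVec_inr_inr, hS, Pi.smul_apply, smul_eq_mul] at h₃
    have hz : z = -(b * wn) := by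
      have : (z + b * wn) * w (.inr (.inr ())) = 0 := by linear_combination -h₃
      linear_combination (mul_eq_zero.mp this).resolve_right hs
    rw [hz]
    simpa using mul_pos hb hwn
  · refine re_neg_of_reduced_eigenvector (d := fun i => wn * a i) (fun i => mul_pos hwn (ha i))
      hq hx (mul_pos hb hwn) hxq hu fun i => ?_
    push_cast
    linear_combination (z + b * wn) * h₁ i - wn * a i * h₂ i

end Jacobian

theorem stmt_12 (n : ℕ)
    (a q x : Fin (n - 1) → ℝ) (xn b wn : ℝ)
    (ha : ∀ k, 0 < a k) (hq : ∀ k, 0 < q k) (hx : ∀ k, 0 < x k)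
    (hb : 0 < b) (hwn : 0 < wn)
    (hpos : 0 < 1 - ∑ l, x l / q l)
    (J : Matrix (Fin (n - 1) ⊕ (Fin (n - 1) ⊕ Unit))
      (Fin (n - 1) ⊕ (Fin (n - 1) ⊕ Unit)) ℝ)
    (hJ : J = Matrix.of fun i j =>
      match i, j with
      | Sum.inl _, Sum.inl _ => 0
      | Sum.inl i, Sum.inr (Sum.inl j) => if i = j then -(wn * a i) else 0
      | Sum.inl _, Sum.inr (Sum.inr _) => 0
      | Sum.inr (Sum.inl i), Sum.inl j => if i = j then q i - x i else -x i
      | Sum.inr (Sum.inl i), Sum.inr (Sum.inl j) => if i = j then -(b * wn) else 0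
      | Sum.inr (Sum.inl _), Sum.inr (Sum.inr _) => 0
      | Sum.inr (Sum.inr _), Sum.inl _ => -xn
      | Sum.inr (Sum.inr _), Sum.inr (Sum.inl _) => 0
      | Sum.inr (Sum.inr _), Sum.inr (Sum.inr _) => -(b * wn)) :
    ∀ z : ℂ,
      (z • (1 : Matrix (Fin (n - 1) ⊕ (Fin (n - 1) ⊕ Unit))
          (Fin (n - 1) ⊕ (Fin (n - 1) ⊕ Unit)) ℂ) - J.map Complex.ofReal).det = 0 →
      z.re < 0 := by
  have hJ' : J = jacobian a q x xn b wn := by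
    subst hJ
    ext (i | i | ⟨⟩) (j | j | ⟨⟩) <;> rfl
  intro z hz
  obtain ⟨w, hw, hzw⟩ := exists_mulVec_eq_zero_iff.mpr hz
  rw [sub_mulVec, smul_mulVec, one_mulVec, sub_eq_zero] at hzw
  subst hJ'
  exact jacobian_eigenvalue_re_neg ha hq hx hb hwn (sub_pos.mp hpos) hw hzw.symm
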